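/- Let G be a finite group, P ≤ G a subgroup, and χ a character of G that vanishes on all nonidentity elements of P. Then |P| divides χ(1). -/

import Mathlib

open FDRep Module CategoryTheory

/-- If `χ` is a character of `G` vanishing on all nonidentity elements of a subgroup `P`,
then `|P|` divides `χ(1)`. -/
theorem stmt_13 {G : Type} [Group G] [Fintype G]
    (V : FDRep ℂ G) (P : Subgroup G)
    (hvanish : ∀ x : G, x ∈ P → x ≠ 1 → V.character x = 0) :
    Nat.card P ∣ finrank ℂ V := by
  classical
  set W : FDRep ℂ P := FDRep.of (V.ρ.comp P.subtype) with hW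
  have hchar : ∀ p : P, W.character p = V.character (p : G) := fun p => rfl
  have hsum : ∑ p : P, W.character p = (finrank ℂ V : ℂ) := by
    rw [Finset.sum_eq_single (1 : P)]
    · rw [hchar]; simpa using V.char_one
    · intro b _ hb
      rw [hchar]
      exact hvanish b b.2 (by simpa using hb)
    · simp
  have hinv : Invertible ((Fintype.card P : ℂ)) := invertibleOfNonzero (by
    exact_mod_cast Fintype.card_ne_zero)
  have h := FDRep.average_char_eq_finrank_invariants W
  rw [hsum] at h
  have hcast : (finrank ℂ V : ℂ) = (Fintype.card P : ℂ) * (finrank ℂ (Representation.invariants W.ρ) : ℂ) := by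
    rw [← h]
    field_simp
    rw [Nat.card_eq_fintype_card]
  have : finrank ℂ V = Fintype.card P * finrank ℂ (Representation.invariants W.ρ) := by
    exact_mod_cast hcast
  rw [Nat.card_eq_fintype_card]
  exact ⟨_, this⟩
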